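/- Let A be a random n × N sign matrix such that (i) P{‖A‖ > 3√N} ≤ q, and (ii) there are constants 0 < p < 1, ε > 0, C > 0 with P{‖Ay‖₂ < 6ε√N ‖y‖₂} < C p^n for every fixed y ∈ ℝ^N, and suppose there is a finite set 𝒩 with |𝒩| ≤ e^{ζN} forming an ε-net of δ√N B₁^N, where ζ < ξ log(1/p) and n = ξN. Then with probability at least 1 - q - C e^{ζN} p^n over A, every x ∈ Ker A satisfies ‖x‖₁ ≥ δ√N ‖x‖₂. -/

import Mathlib

/-
If `x ≠ 0` lies in `Ker A` and `‖x‖₁ < δ√N ‖x‖₂`, then its normalisation `u` lies in `δ√N B₁^N`,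
so some net point `y` has `‖u - y‖₂ ≤ ε`. On the event `‖A‖ ≤ 3√N` this gives
`‖Ay‖₂ = ‖A(y - u)‖₂ ≤ 3√N ε`, while `‖y‖₂ ≥ 1 - ε > 1/2`; hence `‖Ay‖₂ < 6ε√N ‖y‖₂`.
So the bad event is contained in `{‖A‖ > 3√N} ∪ ⋃_{y ∈ 𝒩} {‖Ay‖₂ < 6ε√N ‖y‖₂}`, and a union
bound finishes the proof.
-/

open Matrix MeasureTheory

/-- The `ℓ₁` norm on `ℝ^N`. -/
def l1Norm {N : ℕ} (x : Fin N → ℝ) : ℝ := ∑ i, |x i|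

/-- The `ℓ₂` norm on `ℝ^N`. -/
noncomputable def l2Norm {N : ℕ} (x : Fin N → ℝ) : ℝ :=
  Real.sqrt (∑ i, x i ^ 2)

/-- The `ℓ₂ → ℓ₂` operator norm of an `n × N` real matrix. -/
noncomputable def matrixOpNorm {n N : ℕ} (V : Matrix (Fin n) (Fin N) ℝ) : ℝ :=
  ‖LinearMap.toContinuousLinearMap (Matrix.toEuclideanLin V)‖

open Set

section NetArgument

variable {E F : Type*} [SeminormedAddCommGroup E] [SeminormedAddCommGroup F]
  [NormedSpace ℝ E] [NormedSpace ℝ F]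

theorem ContinuousLinearMap.mul_sub_le_opNorm_mul_of_apply_eq_zero (T : E →L[ℝ] F)
    {u y : E} {c ε : ℝ} (hc : 0 ≤ c) (hu : T u = 0) (hy : c * ‖y‖ ≤ ‖T y‖)
    (huy : ‖u - y‖ ≤ ε) : c * (‖u‖ - ε) ≤ ‖T‖ * ε := by
  have hyu : ‖y - u‖ ≤ ε := norm_sub_rev y u ▸ huy
  calc c * (‖u‖ - ε) ≤ c * ‖y‖ := by
        gcongr
        linarith [norm_le_norm_add_norm_sub' u y]
    _ ≤ ‖T (y - u)‖ := by rwa [map_sub, hu, sub_zero]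
    _ ≤ ‖T‖ * ε := T.le_of_opNorm_le_of_le le_rfl hyu

end NetArgument

variable {n N : ℕ}

theorem l2Norm_eq_norm_toLp (x : Fin N → ℝ) : l2Norm x = ‖WithLp.toLp 2 x‖ := by
  simp [l2Norm, EuclideanSpace.norm_eq]

theorem l2Norm_nonneg (x : Fin N → ℝ) : 0 ≤ l2Norm x :=
  Real.sqrt_nonneg _

theorem l2Norm_smul (c : ℝ) (x : Fin N → ℝ) : l2Norm (c • x) = |c| * l2Norm x := by
  rw [l2Norm_eq_norm_toLp, l2Norm_eq_norm_toLp, WithLp.toLp_smul, norm_smul, Real.norm_eq_abs]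

theorem l1Norm_smul (c : ℝ) (x : Fin N → ℝ) : l1Norm (c • x) = |c| * l1Norm x := by
  simp [l1Norm, Finset.mul_sum, abs_mul]

theorem l1Norm_nonneg (x : Fin N → ℝ) : 0 ≤ l1Norm x :=
  Finset.sum_nonneg fun i _ => abs_nonneg (x i)

theorem mul_sub_le_matrixOpNorm_mul_of_mulVec_eq_zero {V : Matrix (Fin n) (Fin N) ℝ}
    {u y : Fin N → ℝ} {c ε : ℝ} (hc : 0 ≤ c) (hu : V *ᵥ u = 0)
    (hy : c * l2Norm y ≤ l2Norm (V *ᵥ y)) (huy : l2Norm (u - y) ≤ ε) :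
    c * (l2Norm u - ε) ≤ matrixOpNorm V * ε := by
  simp only [l2Norm_eq_norm_toLp, WithLp.toLp_sub] at hy huy ⊢
  exact (LinearMap.toContinuousLinearMap (Matrix.toEuclideanLin V))
    |>.mul_sub_le_opNorm_mul_of_apply_eq_zero hc (by simp [Matrix.toLpLin_toLp, hu]) hy huy

theorem mul_l2Norm_le_l1Norm_of_unit {V : Matrix (Fin n) (Fin N) ℝ} {r : ℝ}
    (h : ∀ u, V *ᵥ u = 0 → l2Norm u = 1 → r ≤ l1Norm u) {x : Fin N → ℝ} (hx : V *ᵥ x = 0) :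
    r * l2Norm x ≤ l1Norm x := by
  rcases (l2Norm_nonneg x).eq_or_lt with hx0 | hx0
  · rw [← hx0, mul_zero]
    exact l1Norm_nonneg x
  have hu := h ((l2Norm x)⁻¹ • x) (by rw [Matrix.mulVec_smul, hx, smul_zero])
    (by rw [l2Norm_smul, abs_inv, abs_of_pos hx0, inv_mul_cancel₀ hx0.ne'])
  rw [l1Norm_smul, abs_inv, abs_of_pos hx0, inv_mul_eq_div, le_div_iff₀ hx0] at hu
  exact hu

theorem l1Norm_lower_bound_of_net {V : Matrix (Fin n) (Fin N) ℝ} {𝒩 : Set (Fin N → ℝ)}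
    {r c M ε : ℝ} (hc : 0 ≤ c) (hV : matrixOpNorm V ≤ M) (hcM : M * ε < c * (1 - ε))
    (hnet : ∀ x, l1Norm x ≤ r → ∃ y ∈ 𝒩, l2Norm (x - y) ≤ ε)
    (hgood : ∀ y ∈ 𝒩, c * l2Norm y ≤ l2Norm (V *ᵥ y)) {x : Fin N → ℝ} (hx : V *ᵥ x = 0) :
    r * l2Norm x ≤ l1Norm x := by
  refine mul_l2Norm_le_l1Norm_of_unit (fun u hu hu1 => le_of_not_ge fun hur => ?_) hx
  obtain ⟨y, hy𝒩, huy⟩ := hnet u hur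
  have hε : 0 ≤ ε := (l2Norm_nonneg _).trans huy
  have := mul_sub_le_matrixOpNorm_mul_of_mulVec_eq_zero hc hu (hgood y hy𝒩) huy
  rw [hu1] at this
  linarith [mul_le_mul_of_nonneg_right hV hε]

section UnionBound

variable {α ι : Type*} [MeasurableSpace α] {μ : Measure α}

theorem measureReal_union_biUnion_finset_le {E : Set α} {F : ι → Set α} {s : Finset ι}
    {a b : ℝ} (hE : μ.real E ≤ a) (hF : ∀ i ∈ s, μ.real (F i) ≤ b) :
    μ.real (E ∪ ⋃ i ∈ s, F i) ≤ a + s.card * b := by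
  calc μ.real (E ∪ ⋃ i ∈ s, F i) ≤ μ.real E + ∑ i ∈ s, μ.real (F i) :=
        (measureReal_union_le _ _).trans (by gcongr; exact measureReal_biUnion_finset_le s F)
    _ ≤ a + s.card * b := by
        gcongr
        simpa using Finset.sum_le_sum hF

theorem one_sub_probReal_le_of_compl_subset [IsProbabilityMeasure μ] {s t : Set α}
    (h : sᶜ ⊆ t) : 1 - μ.real s ≤ μ.real t := by
  have := measureReal_union_le (μ := μ) s sᶜ
  rw [union_compl_self, probReal_univ] at this
  linarith [measureReal_mono (μ := μ) h]

end UnionBound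

theorem random_kernel_l1_lower_bound_general
    {Ω : Type*} [MeasurableSpace Ω] (μ : Measure Ω) [IsProbabilityMeasure μ]
    (n N : ℕ) (hN : 1 ≤ N) (p C ε δ ζ q : ℝ)
    (hε0 : 0 < ε) (hε : ε < 1/2)
    (A : Ω → Matrix (Fin n) (Fin N) ℝ)
    (hop : (μ {ω | 3 * Real.sqrt N < matrixOpNorm (A ω)}).toReal ≤ q)
    (hy : ∀ y : Fin N → ℝ,
      (μ {ω | l2Norm ((A ω).mulVec y) < 6 * ε * Real.sqrt N * l2Norm y}).toReal
        < C * p ^ n)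
    (𝒩 : Finset (Fin N → ℝ))
    (hcard : (𝒩.card : ℝ) ≤ Real.exp (ζ * N))
    (hnet : ∀ x : Fin N → ℝ, l1Norm x ≤ δ * Real.sqrt N →
      ∃ y ∈ 𝒩, l2Norm (x - y) ≤ ε) :
    1 - q - C * Real.exp (ζ * N) * p ^ n ≤
      (μ {ω | ∀ x : Fin N → ℝ, (A ω).mulVec x = 0 →
        δ * Real.sqrt N * l2Norm x ≤ l1Norm x}).toReal := by
  set Bad : Set Ω := {ω | 3 * Real.sqrt N < matrixOpNorm (A ω)} ∪
    ⋃ y ∈ 𝒩, {ω | l2Norm (A ω *ᵥ y) < 6 * ε * Real.sqrt N * l2Norm y}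
  have hsN : 0 < Real.sqrt N := Real.sqrt_pos.2 (by exact_mod_cast hN)
  have hgood : Badᶜ ⊆ {ω | ∀ x : Fin N → ℝ, A ω *ᵥ x = 0 →
      δ * Real.sqrt N * l2Norm x ≤ l1Norm x} := by
    intro ω hω x hx
    simp only [Bad, compl_union, mem_inter_iff, mem_compl_iff, mem_ofPred_eq, mem_iUnion,
      not_lt, not_exists] at hω
    exact l1Norm_lower_bound_of_net (by positivity) hω.1 (by nlinarith [mul_pos hsN hε0])
      hnet hω.2 hx
  have hCp : 0 ≤ C * p ^ n := measureReal_nonneg.trans (hy 0).le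
  have hbad : μ.real Bad ≤ q + Real.exp (ζ * N) * (C * p ^ n) := by
    calc μ.real Bad ≤ q + 𝒩.card * (C * p ^ n) :=
          measureReal_union_biUnion_finset_le hop fun y _ => (hy y).le
      _ ≤ q + Real.exp (ζ * N) * (C * p ^ n) := by gcongr
  calc 1 - q - C * Real.exp (ζ * N) * p ^ n ≤ 1 - μ.real Bad := by linarith
    _ ≤ μ.real _ := one_sub_probReal_le_of_compl_subset hgood

/-- **Lemma B.** Let `A` be a random `n × N` sign matrix with
(i) `P{‖A‖ > 3√N} ≤ q` and (ii) `P{‖Ay‖₂ < 6ε√N‖y‖₂} < C pⁿ` for every fixed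
`y`, and suppose there is a finite `ε`-net `𝒩` of `δ√N B₁^N` with
`|𝒩| ≤ e^{ζN}`, where `ζ < ξ log(1/p)` and `n = ξN`. Then with probability at
least `1 - q - C e^{ζN} pⁿ`, every `x ∈ Ker A` satisfies
`‖x‖₁ ≥ δ√N ‖x‖₂`. -/
theorem random_kernel_l1_lower_bound
    {Ω : Type*} [MeasurableSpace Ω] (μ : Measure Ω) [IsProbabilityMeasure μ]
    (n N : ℕ) (hN : 1 ≤ N) (ξ p C ε δ ζ q : ℝ)
    (hξ0 : 0 < ξ) (hξ1 : ξ < 1) (hn : (n : ℝ) = ξ * N)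
    (hp0 : 0 < p) (hp1 : p < 1) (hC : 0 < C)
    (hε0 : 0 < ε) (hε : ε < 1/2) (hδ : 0 < δ)
    (hζ : ζ < ξ * Real.log (1 / p))
    (A : Ω → Matrix (Fin n) (Fin N) ℝ)
    (hsign : ∀ ω i j, A ω i j = 1 ∨ A ω i j = -1)
    (hop : (μ {ω | 3 * Real.sqrt N < matrixOpNorm (A ω)}).toReal ≤ q)
    (hy : ∀ y : Fin N → ℝ,
      (μ {ω | l2Norm ((A ω).mulVec y) < 6 * ε * Real.sqrt N * l2Norm y}).toReal
        < C * p ^ n)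
    (𝒩 : Finset (Fin N → ℝ))
    (hcard : (𝒩.card : ℝ) ≤ Real.exp (ζ * N))
    (h𝒩sub : ∀ y ∈ 𝒩, l1Norm y ≤ δ * Real.sqrt N)
    (hnet : ∀ x : Fin N → ℝ, l1Norm x ≤ δ * Real.sqrt N →
      ∃ y ∈ 𝒩, l2Norm (x - y) ≤ ε) :
    1 - q - C * Real.exp (ζ * N) * p ^ n ≤
      (μ {ω | ∀ x : Fin N → ℝ, (A ω).mulVec x = 0 →
        δ * Real.sqrt N * l2Norm x ≤ l1Norm x}).toReal :=
  random_kernel_l1_lower_bound_general μ n N hN p C ε δ ζ q hε0 hε A hop hy 𝒩 hcard hnet
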